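/- arXiv:2410.19674 — 2 statements merged into one kernel-verified Lean document; each statement's English description precedes it below -/
import Mathlib

section
/- For integers n > 1, m > 1, and any r-regular bipartite graph G of order m with r ≥ 1, the lexicographic product G[\overline{K_n}] satisfies χ_ld(G[\overline{K_n}]) = 2. -/
open Finset

open Classical in
/-- The weight of a vertex: sum of labels of its neighbors. -/
noncomputable def ldWeight {V : Type*} (G : SimpleGraph V) [Fintype V] (f : V → ℕ) (v : V) : ℕ :=
  ∑ x ∈ Finset.univ, if G.Adj v x then f x else 0

/-- `f` is a local distance antimagic labeling of `G`: a bijection onto `{1,…,|V|}`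
with adjacent vertices getting distinct weights. -/
def IsLDAL {V : Type*} (G : SimpleGraph V) [Fintype V] (f : V → ℕ) : Prop :=
  Set.BijOn f Set.univ (Set.Icc 1 (Fintype.card V)) ∧
    ∀ ⦃u v : V⦄, G.Adj u v → ldWeight G f u ≠ ldWeight G f v

/-- The local distance antimagic chromatic number: minimum number of distinct weights. -/
noncomputable def chiLD {V : Type*} (G : SimpleGraph V) [Fintype V] : ℕ :=
  sInf {k | ∃ f : V → ℕ, IsLDAL G f ∧ (Finset.univ.image (ldWeight G f)).card = k}

/-- The join `G + H` of two graphs. -/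
def graphJoin {α β : Type*} (G : SimpleGraph α) (H : SimpleGraph β) :
    SimpleGraph (α ⊕ β) where
  Adj x y :=
    match x, y with
    | Sum.inl a, Sum.inl b => G.Adj a b
    | Sum.inr a, Sum.inr b => H.Adj a b
    | Sum.inl _, Sum.inr _ => True
    | Sum.inr _, Sum.inl _ => True
  symm := by
    constructor
    rintro (a | a) (b | b) h
    exacts [G.adj_symm h, trivial, trivial, H.adj_symm h]
  loopless := by
    constructor
    rintro (a | a) h
    exacts [G.loopless.irrefl a h, H.loopless.irrefl a h]

/-- The lexicographic product `G[H]`. -/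
def lexProd {α β : Type*} (G : SimpleGraph α) (H : SimpleGraph β) :
    SimpleGraph (α × β) where
  Adj x y := G.Adj x.1 y.1 ∨ (x.1 = y.1 ∧ H.Adj x.2 y.2)
  symm := by
    constructor
    rintro x y (h | ⟨e, h⟩)
    exacts [Or.inl h.symm, Or.inr ⟨e.symm, h.symm⟩]
  loopless := by
    constructor
    rintro x (h | ⟨e, h⟩)
    exacts [G.loopless.irrefl _ h, H.loopless.irrefl _ h]

/-- The friendship graph `F_n`: `n` triangles sharing the central vertex `none`. -/
def friendship (n : ℕ) : SimpleGraph (Option (Fin n × Fin 2)) where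
  Adj x y := x ≠ y ∧ (x = none ∨ y = none ∨ ∃ i a b, x = some (i, a) ∧ y = some (i, b))
  symm := by
    constructor
    rintro x y ⟨hne, h⟩
    refine ⟨hne.symm, ?_⟩
    rcases h with h | h | ⟨i, a, b, hx, hy⟩
    · exact Or.inr (Or.inl h)
    · exact Or.inl h
    · exact Or.inr (Or.inr ⟨i, b, a, hy, hx⟩)
  loopless := ⟨fun x h => h.1 rfl⟩

/-- The bistar `B_{n,n}`: two adjacent centers, each with `n` leaves. -/
def bistar (n : ℕ) : SimpleGraph (Bool ⊕ Bool × Fin n) where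
  Adj x y :=
    match x, y with
    | Sum.inl a, Sum.inl b => a ≠ b
    | Sum.inl a, Sum.inr (c, _) => a = c
    | Sum.inr (c, _), Sum.inl a => a = c
    | Sum.inr _, Sum.inr _ => False
  symm := by
    constructor
    rintro (a | ⟨c, i⟩) (b | ⟨d, j⟩) h
    exacts [h.symm, h, h, h.elim]
  loopless := by
    constructor
    rintro (a | ⟨c, i⟩) h
    exacts [h rfl, h]

/-!
Let `A`, `B` be the two colour classes of `G`; regularity forces `|A| = |B| = h`. Choose bijections
`σ₀, …, σₙ₋₁ : V → {0, …, 2h - 1}` such that `∑ⱼ σⱼ v` takes one value on `A` and another on `B`,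
and label the copy `(v, j)` by `2h·j + σⱼ v + 1`. This is a bijection onto `{1, …, 2hn}`, and the
labels of each fibre `{v} × K̄ₙ` add up to `a` over `A` and to `b ≠ a` over `B`. Since the
neighbourhood of `(v, i)` is the union of the fibres over the `r` neighbours of `v`, which all lie
in the other class, vertices over `A` get weight `r·b` and vertices over `B` weight `r·a`: two
weights, and at least two are needed as soon as there is an edge.
-/

def pairedRow (h j p : ℕ) : ℕ := if j % 2 = 0 then p else 2 * h - 1 - p

def halfReverse (h p : ℕ) : ℕ := if p < h then h - 1 - p else 3 * h - 1 - p

def halfShift (h p : ℕ) : ℕ := if p < h then p + h else p - h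

def halfInterleave (h p : ℕ) : ℕ := if p < h then 2 * (h - 1 - p) else 4 * h - 1 - 2 * p

/-- Row `j` of an `n × 2h` array whose rows are permutations of `{0, …, 2h - 1}`. Apart from the
last two (`n` even) or three (`n` odd) rows, the rows come in complementary pairs `p`, `2h - 1 - p`;
the last rows add up to `h - 1` (`n` even) resp. `3h - 2` (`n` odd) on the first half of the columns
and to `3h - 1` on the second half. -/
def rowPerm (h n j p : ℕ) : ℕ :=
  if j + 2 + n % 2 < n then pairedRow h j p
  else if j + 2 + n % 2 = n then p
  else if n % 2 = 0 then halfReverse h p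
  else if j + 2 = n then halfShift h p
  else halfInterleave h p

lemma rowPerm_lt {h p : ℕ} (n j : ℕ) (hp : p < 2 * h) : rowPerm h n j p < 2 * h := by
  unfold rowPerm pairedRow halfReverse halfShift halfInterleave
  split_ifs <;> omega

lemma rowPerm_injOn (h n j : ℕ) : Set.InjOn (rowPerm h n j) (Set.Iio (2 * h)) := by
  intro p hp q hq hpq
  simp only [Set.mem_Iio] at hp hq
  unfold rowPerm pairedRow halfReverse halfShift halfInterleave at hpq
  split_ifs at hpq <;> omega

lemma sum_pairedRow (h p k : ℕ) (hp : p < 2 * h) :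
    ∑ j ∈ range (2 * k), pairedRow h j p = k * (2 * h - 1) := by
  induction k with
  | zero => simp
  | succ k ih =>
    rw [Nat.mul_succ, sum_range_succ, sum_range_succ, ih, Nat.succ_mul k]
    simp only [pairedRow]
    split_ifs <;> omega

lemma sum_rowPerm {h p : ℕ} (n : ℕ) (hn : 2 ≤ n) (hp : p < 2 * h) :
    ∑ j ∈ range n, rowPerm h n j p = (n - 2 - n % 2) / 2 * (2 * h - 1) +
      if p < h then (if n % 2 = 0 then h - 1 else 3 * h - 2) else 3 * h - 1 := by
  obtain ⟨k, b, rfl, hb⟩ : ∃ k b, n = 2 * k + b ∧ (b = 2 ∨ b = 3) :=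
    ⟨(n - 2 - n % 2) / 2, 2 + n % 2, by omega, by omega⟩
  have hpaired : ∀ j ∈ range (2 * k), rowPerm h (2 * k + b) j p = pairedRow h j p := by
    intro j hj
    rw [mem_range] at hj
    rw [rowPerm, if_pos (by omega)]
  have hk : (2 * k + b - 2 - (2 * k + b) % 2) / 2 = k := by omega
  rw [sum_range_add, sum_congr rfl hpaired, sum_pairedRow h p k hp, hk]
  rcases hb with rfl | rfl <;>
  · simp only [sum_range_succ, sum_range_zero, rowPerm, halfReverse, halfShift, halfInterleave]
    split_ifs <;> omega

lemma exists_perms_sum_eq_ite {h n : ℕ} (hh : 0 < h) (hn : 2 ≤ n) :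
    ∃ σ : Fin n → Equiv.Perm (Fin (2 * h)), ∃ α β : ℕ, α ≠ β ∧
      ∀ p : Fin (2 * h), ∑ j, (σ j p : ℕ) = if (p : ℕ) < h then α else β := by
  let σ (j : Fin n) : Equiv.Perm (Fin (2 * h)) := Equiv.ofBijective
    (fun p => ⟨rowPerm h n j p, rowPerm_lt n j p.isLt⟩)
    (Finite.injective_iff_bijective.mp fun p q hpq =>
      Fin.ext (rowPerm_injOn h n j p.isLt q.isLt (congrArg Fin.val hpq)))
  set C := (n - 2 - n % 2) / 2 * (2 * h - 1)
  refine ⟨σ, C + if n % 2 = 0 then h - 1 else 3 * h - 2, C + (3 * h - 1), by split_ifs <;> omega,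
    fun p => ?_⟩
  change ∑ j : Fin n, rowPerm h n j p = _
  rw [Fin.sum_univ_eq_sum_range (fun j => rowPerm h n j p) n, sum_rowPerm n hn p.isLt]
  split_ifs <;> rfl

lemma bijOn_val_equiv_add_one {W : Type*} [Fintype W] {N : ℕ} (e : W ≃ Fin N) :
    Set.BijOn (fun w => (e w : ℕ) + 1) Set.univ (Set.Icc 1 (Fintype.card W)) := by
  rw [Fintype.card_congr e, Fintype.card_fin]
  refine ⟨fun w _ => ⟨Nat.le_add_left _ _, (e w).isLt⟩,
    fun w _ w' _ hw => e.injective (Fin.ext (by simpa using hw)), ?_⟩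
  rintro y ⟨hy₁, hy₂⟩
  exact ⟨e.symm ⟨y - 1, by omega⟩, trivial, by simp; omega⟩

lemma exists_bijOn_sum_fiber_eq_ite {V : Type*} [Fintype V] [DecidableEq V] {s : Finset V}
    {h : ℕ} (hh : 0 < h) (e : V ≃ Fin (2 * h)) (he : ∀ v, (e v : ℕ) < h ↔ v ∈ s) {n : ℕ}
    (hn : 2 ≤ n) :
    ∃ F : V × Fin n → ℕ, Set.BijOn F Set.univ (Set.Icc 1 (Fintype.card (V × Fin n))) ∧
      ∃ a b : ℕ, a ≠ b ∧ ∀ v, ∑ j, F (v, j) = if v ∈ s then a else b := by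
  obtain ⟨σ, α, β, hαβ, hσ⟩ := exists_perms_sum_eq_ite hh hn
  let E : V × Fin n ≃ Fin (n * (2 * h)) := (Equiv.prodComm _ _).trans
    ((Equiv.prodShear (Equiv.refl _) fun j => e.trans (σ j)).trans finProdFinEquiv)
  refine ⟨fun x => (E x : ℕ) + 1, bijOn_val_equiv_add_one E, α + ∑ j : Fin n, (2 * h * j + 1),
    β + ∑ j : Fin n, (2 * h * j + 1), by omega, fun v => ?_⟩
  simp only [E, Equiv.trans_apply, Equiv.prodComm_apply, Equiv.prodShear_apply, Prod.fst_swap,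
    Prod.snd_swap, Equiv.refl_apply, finProdFinEquiv_apply_val, add_assoc, sum_add_distrib, hσ, he]
  split_ifs <;> rfl

lemma SimpleGraph.IsRegularOfDegree.card_eq_card_compl {V : Type*} [Fintype V] [DecidableEq V]
    {G : SimpleGraph V} [DecidableRel G.Adj] {r : ℕ} (hreg : G.IsRegularOfDegree r) (hr : r ≠ 0)
    {s : Finset V} (hG : G.IsBipartiteWith s ↑sᶜ) : #s = #sᶜ := by
  have := SimpleGraph.isBipartiteWith_sum_degrees_eq hG
  simp only [hreg.degree_eq, sum_const, smul_eq_mul] at this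
  exact Nat.eq_of_mul_eq_mul_right (Nat.pos_of_ne_zero hr) this

lemma exists_equiv_fin_two_mul {V : Type*} [Fintype V] [DecidableEq V] {s : Finset V}
    (hs : #s = #sᶜ) : ∃ e : V ≃ Fin (2 * #s), ∀ v, (e v : ℕ) < #s ↔ v ∈ s := by
  let eCompl : {v // v ∉ s} ≃ Fin #s :=
    (Equiv.subtypeEquivRight fun _ => mem_compl.symm).trans (sᶜ.equivFinOfCardEq hs.symm)
  let e : V ≃ Fin (2 * #s) :=
    ((Equiv.sumCompl (· ∈ s)).symm.trans (Equiv.sumCongr s.equivFin eCompl)).trans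
      (finSumFinEquiv.trans (finCongr (two_mul _).symm))
  refine ⟨e, fun v => ?_⟩
  by_cases hv : v ∈ s
  · simp [e, Equiv.sumCompl_symm_apply_of_pos hv, hv]
  · simp [e, Equiv.sumCompl_symm_apply_of_neg hv, hv]

section LocalDistanceAntimagic

variable {W : Type*} [Fintype W] {H : SimpleGraph W} {f : W → ℕ}

lemma one_lt_card_image_ldWeight (hf : IsLDAL H f) {x y : W} (hxy : H.Adj x y) :
    1 < #(univ.image (ldWeight H f)) :=
  one_lt_card.mpr ⟨_, mem_image_of_mem _ (mem_univ x), _, mem_image_of_mem _ (mem_univ y), hf.2 hxy⟩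

lemma chiLD_eq_two (hf : IsLDAL H f) {x y : W} (hxy : H.Adj x y) (c₁ c₂ : ℕ)
    (hc : ∀ z, ldWeight H f z = c₁ ∨ ldWeight H f z = c₂) : chiLD H = 2 := by
  have hcard : #(univ.image (ldWeight H f)) = 2 := by
    refine le_antisymm ?_ (one_lt_card_image_ldWeight hf hxy)
    calc #(univ.image (ldWeight H f)) ≤ #{c₁, c₂} := card_le_card fun c hc' => by
            obtain ⟨z, -, rfl⟩ := mem_image.mp hc'
            simpa using hc z
      _ ≤ 2 := card_le_two
  exact le_antisymm (Nat.sInf_le ⟨f, hf, hcard⟩) <|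
    le_csInf ⟨2, f, hf, hcard⟩ fun k ⟨g, hg, hk⟩ => hk ▸ one_lt_card_image_ldWeight hg hxy

end LocalDistanceAntimagic

section LexProdBot

open SimpleGraph

lemma lexProd_bot_adj {V β : Type*} {G : SimpleGraph V} {x y : V × β} :
    (lexProd G (⊥ : SimpleGraph β)).Adj x y ↔ G.Adj x.1 y.1 := by
  simp [lexProd]

variable {V β : Type*} [Fintype V] [Fintype β] {G : SimpleGraph V} [DecidableRel G.Adj]

lemma ldWeight_lexProd_bot (F : V × β → ℕ) (x : V × β) :
    ldWeight (lexProd G (⊥ : SimpleGraph β)) F x = ∑ u ∈ G.neighborFinset x.1, ∑ j, F (u, j) := by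
  simp only [ldWeight, lexProd_bot_adj, Fintype.sum_prod_type, neighborFinset_eq_filter, sum_filter]
  exact sum_congr rfl fun u _ => by split_ifs <;> simp

lemma ldWeight_lexProd_bot_eq_ite [DecidableEq V] {r : ℕ} (hreg : G.IsRegularOfDegree r)
    {s : Finset V} (hG : G.IsBipartiteWith s ↑sᶜ) {F : V × β → ℕ} {a b : ℕ}
    (hF : ∀ v, ∑ j, F (v, j) = if v ∈ s then a else b) (x : V × β) :
    ldWeight (lexProd G (⊥ : SimpleGraph β)) F x = r * if x.1 ∈ s then b else a := by
  rw [ldWeight_lexProd_bot, ← hreg.degree_eq x.1, ← card_neighborFinset_eq_degree, ← smul_eq_mul,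
    ← sum_const]
  refine sum_congr rfl fun u hu => ?_
  have := hG.mem_of_adj ((mem_neighborFinset G x.1 u).mp hu)
  simp only [coe_compl, Set.mem_compl_iff, mem_coe] at this
  rw [hF]
  split_ifs <;> tauto

end LexProdBot

theorem stmt_12 {V : Type*} [Fintype V] (G : SimpleGraph V) [DecidableRel G.Adj]
    (n m r : ℕ) (hn : 1 < n) (hm : 1 < m) (hr : 1 ≤ r)
    (hcard : Fintype.card V = m)
    (hreg : G.IsRegularOfDegree r)
    (hbip : ∃ s : Set V, ∀ ⦃u v⦄, G.Adj u v → (u ∈ s ↔ v ∉ s)) :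
    chiLD (lexProd G (⊥ : SimpleGraph (Fin n))) = 2 := by
  classical
  obtain ⟨s, hs⟩ := hbip
  set t := s.toFinset
  have hG : G.IsBipartiteWith t ↑tᶜ := ⟨by simp [disjoint_compl_right], fun u v huv => by
    have := hs huv
    simp only [t, coe_compl, Set.coe_toFinset, Set.mem_compl_iff]; tauto⟩
  obtain ⟨v⟩ : Nonempty V := Fintype.card_pos_iff.mp (by omega)
  obtain ⟨u, hvu⟩ := (G.degree_pos_iff_exists_adj v).mp (hreg.degree_eq v ▸ hr)
  have hAB : #t = #tᶜ := hreg.card_eq_card_compl (by omega) hG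
  obtain ⟨e, he⟩ := exists_equiv_fin_two_mul hAB
  obtain ⟨F, hF, a, b, hab, hsum⟩ :=
    exists_bijOn_sum_fiber_eq_ite (by have := card_add_card_compl t; omega) e he (n := n) (by omega)
  have hw := ldWeight_lexProd_bot_eq_ite hreg hG hsum
  have hrab : r * b ≠ r * a := fun h => hab (Nat.eq_of_mul_eq_mul_left hr h).symm
  let i : Fin n := ⟨0, by omega⟩
  refine chiLD_eq_two ⟨hF, fun x y hxy => ?_⟩ (x := (v, i)) (y := (u, i))
    (lexProd_bot_adj.mpr hvu) (r * b) (r * a) fun x => ?_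
  · have := hG.mem_of_adj (lexProd_bot_adj.mp hxy)
    simp only [coe_compl, Set.mem_compl_iff, mem_coe] at this
    rw [hw, hw]
    split_ifs <;> tauto
  · rw [hw]
    split_ifs <;> simp
end

section
/- For positive integers m and n > 1, χ_ld(K_m[\overline{K_n}]) = m, i.e., the complete multipartite graph with m parts each of size n has local distance antimagic chromatic number m. -/
open Finset

/-!
The weights of a local distance antimagic labeling form a proper colouring, and
`K_m[\overline{K_n}]` contains a copy of `K_m`, so at least `m` distinct weights occur.
Conversely, in `K_m[\overline{K_n}]` the weight of a vertex is the total label sum minus the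
label sum of its own part. Labelling the parts consecutively, part `i` receiving
`i n + 1, …, i n + n`, makes these part sums pairwise distinct, so the weight is a proper
colouring taking exactly one value per part.
-/

section LocalDistanceAntimagic

variable {V : Type*} [Fintype V] {G : SimpleGraph V} {f : V → ℕ}

theorem IsLDAL.colorable (hf : IsLDAL G f) : G.Colorable #(univ.image (ldWeight G f)) := by
  let C : G.Coloring (univ.image (ldWeight G f)) :=
    SimpleGraph.Coloring.mk (fun v => ⟨ldWeight G f v, mem_image_of_mem _ (mem_univ v)⟩)
      fun huv h => hf.2 huv (congrArg Subtype.val h)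
  simpa using C.colorable

theorem chiLD_le (hf : IsLDAL G f) : chiLD G ≤ #(univ.image (ldWeight G f)) :=
  Nat.sInf_le ⟨f, hf, rfl⟩

theorem chromaticNumber_le_chiLD (hf : IsLDAL G f) : G.chromaticNumber ≤ chiLD G := by
  obtain ⟨g, hg, hcard⟩ : chiLD G ∈
      {k | ∃ g : V → ℕ, IsLDAL G g ∧ #(univ.image (ldWeight G g)) = k} :=
    Nat.sInf_mem ⟨_, f, hf, rfl⟩
  exact hcard ▸ hg.colorable.chromaticNumber_le

theorem bijOn_equiv_fin_add_one {N : ℕ} (e : V ≃ Fin N) :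
    Set.BijOn (fun v => (e v : ℕ) + 1) Set.univ (Set.Icc 1 (Fintype.card V)) := by
  rw [Fintype.card_congr e, Fintype.card_fin]
  refine ⟨fun v _ => ⟨Nat.le_add_left 1 _, (e v).2⟩,
    fun u _ v _ h => e.injective (Fin.ext (by simpa using h)), fun k hk => ?_⟩
  exact ⟨e.symm ⟨k - 1, by grind⟩, trivial, by simp only [Equiv.apply_symm_apply]; grind⟩

end LocalDistanceAntimagic

section LexProdTopBot

variable {α β : Type*}

theorem lexProd_top_bot_adj {p q : α × β} :
    (lexProd (⊤ : SimpleGraph α) (⊥ : SimpleGraph β)).Adj p q ↔ p.1 ≠ q.1 := by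
  simp [lexProd]

theorem card_le_chromaticNumber_lexProd_top_bot [Fintype α] [Nonempty β] :
    (Fintype.card α : ℕ∞) ≤
      (lexProd (⊤ : SimpleGraph α) (⊥ : SimpleGraph β)).chromaticNumber := by
  obtain ⟨b⟩ := ‹Nonempty β›
  let φ : (⊤ : SimpleGraph α) →g lexProd ⊤ ⊥ :=
    ⟨fun a => (a, b), fun h => lexProd_top_bot_adj.2 h.ne⟩
  simpa [SimpleGraph.chromaticNumber_top] using SimpleGraph.chromaticNumber_mono_of_hom φ

variable [Fintype α] [Fintype β] {f : α × β → ℕ}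

theorem ldWeight_lexProd_top_bot_add_sum (p : α × β) :
    ldWeight (lexProd ⊤ ⊥) f p + ∑ b, f (p.1, b) = ∑ q, f q := by
  have := Classical.decEq α
  have hblock : ∑ b, f (p.1, b) = ∑ q, if p.1 = q.1 then f q else 0 := by
    rw [Fintype.sum_prod_type,
      Fintype.sum_eq_single p.1 fun a ha => sum_eq_zero fun b _ => if_neg (Ne.symm ha)]
    simp
  rw [ldWeight, hblock, ← sum_add_distrib]
  refine sum_congr rfl fun q _ => ?_
  simp only [lexProd_top_bot_adj]
  split_ifs <;> simp_all

theorem ldWeight_lexProd_top_bot_eq_iff (hf : Function.Injective fun a => ∑ b, f (a, b))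
    {p q : α × β} :
    ldWeight (lexProd ⊤ ⊥) f p = ldWeight (lexProd ⊤ ⊥) f q ↔ p.1 = q.1 := by
  have hp := ldWeight_lexProd_top_bot_add_sum (f := f) p
  have hq := ldWeight_lexProd_top_bot_add_sum (f := f) q
  exact ⟨fun h => hf (by simp only; omega), fun h => by rw [h] at hp; omega⟩

theorem isLDAL_lexProd_top_bot (hf : Function.Injective fun a => ∑ b, f (a, b))
    (hbij : Set.BijOn f Set.univ (Set.Icc 1 (Fintype.card (α × β)))) :
    IsLDAL (lexProd ⊤ ⊥) f :=
  ⟨hbij, fun _ _ hpq => (ldWeight_lexProd_top_bot_eq_iff hf).not.2 (lexProd_top_bot_adj.1 hpq)⟩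

theorem card_image_ldWeight_lexProd_top_bot [Nonempty β]
    (hf : Function.Injective fun a => ∑ b, f (a, b)) :
    #(univ.image (ldWeight (lexProd ⊤ ⊥) f)) = Fintype.card α := by
  classical
  obtain ⟨b⟩ := ‹Nonempty β›
  have hfactor :
      ldWeight (lexProd ⊤ ⊥) f = (fun a => ldWeight (lexProd ⊤ ⊥) f (a, b)) ∘ Prod.fst :=
    funext fun p => (ldWeight_lexProd_top_bot_eq_iff hf).2 rfl
  rw [hfactor, ← image_image, image_univ_of_surjective Prod.fst_surjective,
    card_image_of_injective _ fun a a' h => (ldWeight_lexProd_top_bot_eq_iff hf).1 h, card_univ]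

end LexProdTopBot

theorem injective_sum_finProdFinEquiv_add_one (m n : ℕ) [NeZero n] :
    Function.Injective fun a : Fin m => ∑ b : Fin n, ((finProdFinEquiv (a, b) : ℕ) + 1) := by
  intro a a' h
  have hsum (i : Fin m) : ∑ b : Fin n, ((finProdFinEquiv (i, b) : ℕ) + 1) =
      n * (n * i) + ∑ b : Fin n, ((b : ℕ) + 1) := by
    simp only [finProdFinEquiv, Equiv.coe_fn_mk, sum_add_distrib, sum_const, card_univ,
      Fintype.card_fin, smul_eq_mul, mul_one]
    ring
  simp only [hsum] at h
  exact Fin.ext (by simpa [NeZero.ne n] using h)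

theorem stmt_19_general (m n : ℕ) (hn : 1 < n) :
    chiLD (lexProd (⊤ : SimpleGraph (Fin m)) (⊥ : SimpleGraph (Fin n))) = m := by
  have : NeZero n := ⟨by omega⟩
  let f : Fin m × Fin n → ℕ := fun p => finProdFinEquiv p + 1
  have hblock : Function.Injective fun a => ∑ b, f (a, b) :=
    injective_sum_finProdFinEquiv_add_one m n
  have hf : IsLDAL (lexProd ⊤ ⊥) f :=
    isLDAL_lexProd_top_bot hblock (bijOn_equiv_fin_add_one finProdFinEquiv)
  refine le_antisymm ((chiLD_le hf).trans_eq ?_) ?_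
  · simpa using card_image_ldWeight_lexProd_top_bot hblock
  · simpa using card_le_chromaticNumber_lexProd_top_bot.trans (chromaticNumber_le_chiLD hf)

theorem stmt_19 (m n : ℕ) (hm : 0 < m) (hn : 1 < n) :
    chiLD (lexProd (⊤ : SimpleGraph (Fin m)) (⊥ : SimpleGraph (Fin n))) = m :=
  stmt_19_general m n hn
end
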